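/- Let Λ be a real number and consider the sequence of Möbius transformations on ℝ ∪ {∞} given by r ↦ (1/(1 + Y_l/s_l)) · (-1/r + (Λ - X_l)/s_l) for 0 ≤ l ≤ n-2, where s_l > 0 and 1 + Y_l/s_l ≠ 0. Define r_0 = ∞ and r_{l+1} by applying the l-th transformation to r_l. Then Λ is an eigenvalue of the tridiagonal matrix with diagonal X_0,…,X_{n-1}, subdiagonal s_1,…,s_{n-1} and superdiagonal entries s_l(1 + Y_l/s_l) (0 ≤ l ≤ n-2) if and only if r_{n-1} satisfies -1/r_{n-1} + (Λ - X_{n-1})/s_{n-1} = 0, i.e. the evolution started at ∞ terminates at 0 after the final step. -/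

import Mathlib

/-!
Row `i` of `T v = Λ v` expresses `v (i + 1)` through `v i` and `v (i - 1)` (with `v (-1) = 0`),
since the superdiagonal does not vanish. So every solution of rows `0, …, n - 2` is a multiple of
the solution `u` of this three-term recurrence started from `(0, 1)`, and `Λ` is an eigenvalue iff
`u` also satisfies the last row, i.e. iff its next term vanishes. The `l`-th Möbius map is the same
recurrence acting on the point `[u (l - 1) : u l]` of the projective line; consecutive terms of `u`
never vanish together, so `r l` is exactly this point, and the final condition says that the next
term is `0`.
-/

open Matrix

/-- Tridiagonal matrix: diagonal `d`, subdiagonal `sub i` at `(i, i-1)`,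
superdiagonal `sup i` at `(i, i+1)`. -/
def triDiag (n : ℕ) (d sub sup : ℕ → ℝ) : Matrix (Fin n) (Fin n) ℝ :=
  fun i j =>
    if (i : ℕ) = j then d i
    else if (i : ℕ) = (j : ℕ) + 1 then sub i
    else if (j : ℕ) = (i : ℕ) + 1 then sup i
    else 0

/-- The Möbius map `r ↦ a · (-1/r + b)` on the one-point compactification
`ℝ ∪ {∞}`, with the conventions `-1/∞ = 0` and `-1/0 = ∞` (for `a ≠ 0`). -/
noncomputable def mobiusStep (a b : ℝ) (r : OnePoint ℝ) : OnePoint ℝ :=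
  Option.elim r ((a * b : ℝ) : OnePoint ℝ)
    (fun x : ℝ => if x = 0 then (OnePoint.infty : OnePoint ℝ)
      else ((a * (-1 / x + b) : ℝ) : OnePoint ℝ))

/-- The point `[x : y]` of the projective line, as the slope `y / x` in `ℝ ∪ {∞}`. -/
noncomputable def projRatio (x y : ℝ) : OnePoint ℝ :=
  if x = 0 then OnePoint.infty else ((y / x : ℝ) : OnePoint ℝ)

lemma mobiusStep_infty (a b : ℝ) :
    mobiusStep a b OnePoint.infty = ((a * b : ℝ) : OnePoint ℝ) := rfl

lemma mobiusStep_coe (a b x : ℝ) :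
    mobiusStep a b (x : OnePoint ℝ) =
      if x = 0 then OnePoint.infty else ((a * (-1 / x + b) : ℝ) : OnePoint ℝ) := rfl

lemma projRatio_eq_zero_iff {x y : ℝ} :
    projRatio x y = ((0 : ℝ) : OnePoint ℝ) ↔ x ≠ 0 ∧ y = 0 := by
  unfold projRatio
  split_ifs with hx
  · simp [hx]
  · simp [hx]

lemma mobiusStep_projRatio {a b x y : ℝ} (ha : a ≠ 0) (hxy : x ≠ 0 ∨ y ≠ 0) :
    mobiusStep a b (projRatio x y) = projRatio y (a * (b * y - x)) := by
  by_cases hx : x = 0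
  · have hy : y ≠ 0 := hxy.resolve_left (not_not.mpr hx)
    simp only [projRatio, hx, hy, if_true, if_false, mobiusStep_infty, OnePoint.coe_eq_coe]
    field_simp
    ring
  · by_cases hy : y = 0
    · simp [projRatio, hx, hy, mobiusStep_coe]
    · rw [projRatio, projRatio, if_neg hx, if_neg hy, mobiusStep_coe, if_neg (div_ne_zero hy hx),
        OnePoint.coe_eq_coe]
      field_simp
      ring

noncomputable def transferSeq (a b : ℕ → ℝ) : ℕ → ℝ
  | 0 => 0
  | 1 => 1
  | l + 2 => a l * (b l * transferSeq a b (l + 1) - transferSeq a b l)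

section transferSeq

variable {a b : ℕ → ℝ}

lemma transferSeq_ne_zero_or (ha : ∀ l, a l ≠ 0) (l : ℕ) :
    transferSeq a b l ≠ 0 ∨ transferSeq a b (l + 1) ≠ 0 := by
  induction l with
  | zero => simp [transferSeq]
  | succ l ih =>
    by_contra! h
    have hl : a l * (b l * transferSeq a b (l + 1) - transferSeq a b l) = 0 := h.2
    rw [h.1, mul_zero, zero_sub, mul_neg, neg_eq_zero] at hl
    exact ih.elim (· ((mul_eq_zero.mp hl).resolve_left (ha l))) (· h.1)

lemma eq_projRatio_transferSeq_of_mobiusStep {r : ℕ → OnePoint ℝ} {m : ℕ}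
    (ha : ∀ l, a l ≠ 0) (hr0 : r 0 = OnePoint.infty)
    (hrec : ∀ l < m, r (l + 1) = mobiusStep (a l) (b l) (r l)) :
    ∀ l ≤ m, r l = projRatio (transferSeq a b l) (transferSeq a b (l + 1)) := by
  intro l hl
  induction l with
  | zero => simp [hr0, projRatio, transferSeq]
  | succ l ih =>
    rw [hrec l hl, ih (by omega), mobiusStep_projRatio (ha l) (transferSeq_ne_zero_or ha l)]
    rfl

lemma mobiusStep_one_projRatio_transferSeq_eq_zero_iff (ha : ∀ l, a l ≠ 0) (m : ℕ) :
    mobiusStep 1 (b m) (projRatio (transferSeq a b m) (transferSeq a b (m + 1))) =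
        ((0 : ℝ) : OnePoint ℝ) ↔ transferSeq a b (m + 2) = 0 := by
  rw [mobiusStep_projRatio one_ne_zero (transferSeq_ne_zero_or ha m), projRatio_eq_zero_iff,
    one_mul, transferSeq, mul_eq_zero, or_iff_right (ha m)]
  constructor
  · exact And.right
  · intro h
    refine ⟨fun hm => ?_, h⟩
    rw [hm, mul_zero, zero_sub, neg_eq_zero] at h
    exact (transferSeq_ne_zero_or ha m).elim (· h) (· hm)

lemma eq_mul_transferSeq {w : ℕ → ℝ} {m : ℕ} (hw0 : w 0 = 0)
    (hrec : ∀ l < m, w (l + 2) = a l * (b l * w (l + 1) - w l)) :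
    ∀ k ≤ m + 1, w k = w 1 * transferSeq a b k := by
  intro k hk
  induction k using Nat.strong_induction_on with
  | _ k ih =>
    match k with
    | 0 => simp [hw0, transferSeq]
    | 1 => simp [transferSeq]
    | l + 2 =>
      rw [hrec l (by omega), ih l (by omega) (by omega), ih (l + 1) (by omega) (by omega),
        transferSeq]
      ring

end transferSeq

/-- The padding by zeros on both sides makes row `i` of a tridiagonal matrix read off the entries
`i`, `i + 1`, `i + 2` of this sequence, boundary rows included. -/
def shiftExtend {n : ℕ} (v : Fin n → ℝ) : ℕ → ℝ
  | 0 => 0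
  | k + 1 => if h : k < n then v ⟨k, h⟩ else 0

section shiftExtend

variable {n : ℕ}

@[simp]
lemma shiftExtend_zero (v : Fin n → ℝ) : shiftExtend v 0 = 0 := rfl

@[simp]
lemma shiftExtend_val_add_one (v : Fin n → ℝ) (i : Fin n) : shiftExtend v (i + 1) = v i := by
  simp [shiftExtend]

lemma shiftExtend_add_one (v : Fin n → ℝ) : shiftExtend v (n + 1) = 0 := by
  simp [shiftExtend]

lemma shiftExtend_eq_of_le {u : ℕ → ℝ} (hu0 : u 0 = 0) (hun : u (n + 1) = 0) :
    ∀ k ≤ n + 1, shiftExtend (fun i : Fin n => u (i + 1)) k = u k := by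
  rintro (_ | k) hk
  · exact hu0.symm
  · by_cases hkn : k < n
    · simp [shiftExtend, hkn]
    · simp [shiftExtend, show k = n by omega, hun]

lemma sum_ite_mul_shiftExtend (v : Fin n → ℝ) (c : ℝ) (m : ℕ) :
    ∑ j : Fin n, (if (j : ℕ) + 1 = m then c * shiftExtend v m else 0) = c * shiftExtend v m := by
  rcases m with _ | k
  · simp
  · by_cases hk : k < n
    · rw [Fin.sum_univ_eq_sum_range
        (fun j => if j + 1 = k + 1 then c * shiftExtend v (k + 1) else 0)]
      simp [hk]
    · simp [shiftExtend, hk]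

end shiftExtend

section triDiag

variable {n : ℕ} {d sub sup : ℕ → ℝ}

lemma triDiag_mulVec_apply (v : Fin n → ℝ) (i : Fin n) :
    (triDiag n d sub sup *ᵥ v) i =
      sub i * shiftExtend v i + d i * shiftExtend v (i + 1) + sup i * shiftExtend v (i + 2) := by
  have hterm : ∀ j : Fin n, triDiag n d sub sup i j * v j =
      (if (j : ℕ) + 1 = i then sub i * shiftExtend v i else 0) +
      (if (j : ℕ) + 1 = i + 1 then d i * shiftExtend v (i + 1) else 0) +
      (if (j : ℕ) + 1 = i + 2 then sup i * shiftExtend v (i + 2) else 0) := by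
    intro j
    rw [← shiftExtend_val_add_one v j, triDiag]
    obtain ⟨i, hi⟩ := i
    obtain ⟨j, hj⟩ := j
    dsimp only
    split_ifs <;> first | omega | (subst_vars; ring)
  simp only [mulVec, dotProduct, hterm, Finset.sum_add_distrib, sum_ite_mul_shiftExtend]

lemma triDiag_mulVec_eq_smul_iff (hsub : ∀ i < n, sub i ≠ 0) (hsup : ∀ i < n, sup i ≠ 0)
    (v : Fin n → ℝ) (Λ : ℝ) :
    triDiag n d sub sup *ᵥ v = Λ • v ↔ ∀ i < n, shiftExtend v (i + 2) =
      sub i / sup i * ((Λ - d i) / sub i * shiftExtend v (i + 1) - shiftExtend v i) := by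
  rw [funext_iff, Fin.forall_iff]
  refine forall₂_congr fun i hi => ?_
  have := hsub i hi
  have := hsup i hi
  rw [triDiag_mulVec_apply, Pi.smul_apply, smul_eq_mul, ← shiftExtend_val_add_one v ⟨i, hi⟩]
  field_simp
  constructor <;> intro h <;> linarith

theorem triDiag_hasEigenvector_iff (hsub : ∀ i < n, sub i ≠ 0) (hsup : ∀ i < n, sup i ≠ 0)
    (Λ : ℝ) :
    (∃ v : Fin n → ℝ, v ≠ 0 ∧ triDiag n d sub sup *ᵥ v = Λ • v) ↔
      transferSeq (fun i => sub i / sup i) (fun i => (Λ - d i) / sub i) (n + 1) = 0 := by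
  set u := transferSeq (fun i => sub i / sup i) (fun i => (Λ - d i) / sub i)
  constructor
  · rintro ⟨v, hv, heig⟩
    rw [triDiag_mulVec_eq_smul_iff hsub hsup] at heig
    have hmul := eq_mul_transferSeq (shiftExtend_zero v) heig
    have hv1 : shiftExtend v 1 ≠ 0 := by
      refine fun h1 => hv (funext fun i => ?_)
      rw [← shiftExtend_val_add_one v i, hmul _ (by omega), h1, zero_mul, Pi.zero_apply]
    have hlast := hmul (n + 1) le_rfl
    rw [shiftExtend_add_one, eq_comm, mul_eq_zero] at hlast
    exact hlast.resolve_left hv1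
  · intro hun
    have hn : n ≠ 0 := by
      rintro rfl
      exact one_ne_zero hun
    have hext := shiftExtend_eq_of_le (rfl : u 0 = 0) hun
    refine ⟨fun i => u (i + 1), fun h => ?_, ?_⟩
    · have := congrFun h ⟨0, Nat.pos_of_ne_zero hn⟩
      exact one_ne_zero this
    · rw [triDiag_mulVec_eq_smul_iff hsub hsup]
      intro i hi
      rw [hext i (by omega), hext (i + 1) (by omega), hext (i + 2) (by omega)]
      rfl

end triDiag

/-- Valkó–Virág ratio evolution: `Λ` is an eigenvalue of the tridiagonal matrix with
diagonal `X`, subdiagonal `s` and superdiagonal `s_l (1 + Y_l/s_l)` iff the Markov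
evolution `r_0 = ∞`, `r_{l+1} = (1/(1+Y_l/s_l)) (-1/r_l + (Λ - X_l)/s_l)` started at
`∞` terminates at `0` after the final step, i.e. `-1/r_{n-1} + (Λ - X_{n-1})/s_{n-1} = 0`. -/
theorem tridiag_eigenvalue_iff_ratio_evolution (n : ℕ) (hn : 2 ≤ n)
    (X Y s : ℕ → ℝ) (hs : ∀ l, 0 < s l) (hY : ∀ l, 1 + Y l / s l ≠ 0)
    (Λ : ℝ) (r : ℕ → OnePoint ℝ)
    (hr0 : r 0 = OnePoint.infty)
    (hrec : ∀ l : ℕ, l ≤ n - 2 →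
      r (l + 1) = mobiusStep (1 / (1 + Y l / s l)) ((Λ - X l) / s l) (r l))
    (T : Matrix (Fin n) (Fin n) ℝ)
    (hT : T = triDiag n X s (fun l => s l * (1 + Y l / s l))) :
    (∃ v : Fin n → ℝ, v ≠ 0 ∧ T.mulVec v = Λ • v) ↔
      mobiusStep 1 ((Λ - X (n - 1)) / s (n - 1)) (r (n - 1)) = ((0 : ℝ) : OnePoint ℝ) := by
  have hs0 : ∀ l, s l ≠ 0 := fun l => (hs l).ne'
  have hsup : ∀ l, s l * (1 + Y l / s l) ≠ 0 := fun l => mul_ne_zero (hs0 l) (hY l)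
  have ha : (fun l => s l / (s l * (1 + Y l / s l))) = fun l => 1 / (1 + Y l / s l) := by
    funext l
    rw [div_mul_cancel_left₀ (hs0 l), one_div]
  have ha0 : ∀ l, 1 / (1 + Y l / s l) ≠ 0 := fun l => one_div_ne_zero (hY l)
  have hr : r (n - 1) = projRatio (transferSeq _ _ (n - 1)) (transferSeq _ _ (n - 1 + 1)) :=
    eq_projRatio_transferSeq_of_mobiusStep ha0 hr0 (fun l hl => hrec l (by omega)) (n - 1) le_rfl
  rw [hT, triDiag_hasEigenvector_iff (fun l _ => hs0 l) (fun l _ => hsup l), ha, hr,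
    ← show n - 1 + 2 = n + 1 by omega]
  exact (mobiusStep_one_projRatio_transferSeq_eq_zero_iff ha0 (n - 1)).symm
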